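/- For distinct nonzero real numbers k, h with k² ≠ h² and nonzero complex constants c, d, the function u(x,t) = c d (k² − h²)/( k h [ c d̄ k e^{−i(h²x + t/h²)} + c̄ d h e^{−i(k²x + t/k²)} ] ) satisfies the Fokas-Lenells equation u_{xt} + u − 2i|u|²u_x = 0 wherever defined; moreover if |k| ≠ |h| the denominator never vanishes, so u is a globally smooth solution. -/

import Mathlib

open Complex

noncomputable def dX (f : ℝ → ℝ → ℂ) (x t : ℝ) : ℂ := deriv (fun x' => f x' t) x
noncomputable def dT (f : ℝ → ℝ → ℂ) (x t : ℝ) : ℂ := deriv (fun t' => f x t') t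

/-- The real-eigenvalue one-soliton solution of the Fokas-Lenells equation. -/
noncomputable def realSoliton (k h : ℝ) (c d : ℂ) (x t : ℝ) : ℂ :=
  c * d * ((k : ℂ) ^ 2 - (h : ℂ) ^ 2) /
    ((k : ℂ) * (h : ℂ) *
      (c * starRingEnd ℂ d * (k : ℂ) *
          Complex.exp (-I * ((h : ℂ) ^ 2 * (x : ℂ) + (t : ℂ) / (h : ℂ) ^ 2))
        + starRingEnd ℂ c * d * (h : ℂ) *
          Complex.exp (-I * ((k : ℂ) ^ 2 * (x : ℂ) + (t : ℂ) / (k : ℂ) ^ 2))))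

/-!
Write `u = A / D` with `A = c d (k² - h²)` and `D = k h (c d̄ k e_h + c̄ d h e_k)`, where
`e_κ = exp (-i (κ² x + t / κ²))`. Each plane wave satisfies `∂ₓ∂ₜ e_κ = -e_κ`, hence `D_xt = -D`,
and for such a quotient the Fokas-Lenells residual equals
`2 A / (D³ D̄) · (D̄ (D² + D_x D_t) + i |A|² D_x)`. Since `ē_κ = e_κ⁻¹`, the bracket is a rational
expression in `e_h, e_k` and vanishes identically: `D² + D_x D_t` is a multiple of `e_h e_k`.
If `|k| ≠ |h|`, the two terms of `D` have moduli `|k||c||d| ≠ |h||c||d|`, so `D` never vanishes.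
-/

open ComplexConjugate

noncomputable def flResidual (u : ℝ → ℝ → ℂ) (x t : ℝ) : ℂ :=
  dT (dX u) x t + u x t - 2 * I * (u x t * conj (u x t)) * dX u x t

section Quotient

variable {A : ℂ} {D Dx Dt : ℝ → ℝ → ℂ} {x t : ℝ}

theorem dX_div_eq (hDx : HasDerivAt (fun x' => D x' t) (Dx x t) x) (hD : D x t ≠ 0) :
    dX (fun x t => A / D x t) x t = -A * Dx x t / D x t ^ 2 := by
  rw [dX, ((hasDerivAt_const x A).fun_div hDx hD).deriv]
  ring

theorem dT_dX_div_eq {Dxt : ℂ} (hDx : ∀ t', HasDerivAt (fun x' => D x' t') (Dx x t') x)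
    (hDt : HasDerivAt (fun t' => D x t') (Dt x t) t)
    (hDxt : HasDerivAt (fun t' => Dx x t') Dxt t) (hD : D x t ≠ 0) :
    dT (dX (fun x t => A / D x t)) x t
      = A * (2 * Dx x t * Dt x t - D x t * Dxt) / D x t ^ 3 := by
  have hD_near : ∀ᶠ t' in nhds t, D x t' ≠ 0 := hDt.continuousAt.eventually_ne hD
  have hdX : (fun t' => dX (fun x t => A / D x t) x t') =ᶠ[nhds t]
      fun t' => -A * Dx x t' / D x t' ^ 2 :=
    hD_near.mono fun t' ht' => dX_div_eq (hDx t') ht'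
  rw [dT, hdX.deriv_eq, ((hDxt.const_mul (-A)).fun_div (hDt.fun_pow 2) (pow_ne_zero 2 hD)).deriv]
  field_simp
  ring

theorem flResidual_div (hDx : ∀ t', HasDerivAt (fun x' => D x' t') (Dx x t') x)
    (hDt : HasDerivAt (fun t' => D x t') (Dt x t) t)
    (hDxt : HasDerivAt (fun t' => Dx x t') (-D x t) t) (hD : D x t ≠ 0) :
    flResidual (fun x t => A / D x t) x t = 2 * A / (D x t ^ 3 * conj (D x t)) *
      (conj (D x t) * (D x t ^ 2 + Dx x t * Dt x t) + I * (A * conj A) * Dx x t) := by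
  have hD' : conj (D x t) ≠ 0 := (map_ne_zero _).mpr hD
  rw [flResidual, dT_dX_div_eq hDx hDt hDxt hD, dX_div_eq (hDx t) hD]
  simp only [map_div₀]
  field_simp
  ring

end Quotient

noncomputable def planeWave (κ x t : ℝ) : ℂ :=
  exp (-I * ((κ : ℂ) ^ 2 * x + t / (κ : ℂ) ^ 2))

noncomputable def twoWave (p q : ℂ) (a b x t : ℝ) : ℂ :=
  p * planeWave a x t + q * planeWave b x t

section PlaneWave

variable (κ x t : ℝ)

theorem hasDerivAt_planeWave_x :
    HasDerivAt (fun x' => planeWave κ x' t) (-I * κ ^ 2 * planeWave κ x t) x := by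
  have := ((((hasDerivAt_id (x : ℂ)).const_mul ((κ : ℂ) ^ 2)).add_const
    ((t : ℂ) / (κ : ℂ) ^ 2)).const_mul (-I)).cexp.comp_ofReal
  exact this.congr_deriv (by simp only [planeWave, id]; ring)

theorem hasDerivAt_planeWave_t :
    HasDerivAt (fun t' => planeWave κ x t') (-I / κ ^ 2 * planeWave κ x t) t := by
  have := ((((hasDerivAt_id (t : ℂ)).div_const ((κ : ℂ) ^ 2)).const_add
    ((κ : ℂ) ^ 2 * x)).const_mul (-I)).cexp.comp_ofReal
  exact this.congr_deriv (by simp only [planeWave, id]; ring)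

theorem norm_planeWave : ‖planeWave κ x t‖ = 1 := by
  rw [planeWave, norm_exp]
  norm_num [← ofReal_pow, ← ofReal_div, ← ofReal_mul, ← ofReal_add]

theorem conj_planeWave : conj (planeWave κ x t) = (planeWave κ x t)⁻¹ := by
  rw [planeWave, ← exp_conj, ← exp_neg]
  simp only [map_neg, map_mul, map_add, map_div₀, map_pow, conj_I, conj_ofReal]
  ring_nf

end PlaneWave

section TwoWave

variable {p q : ℂ} {a b x t : ℝ}

theorem hasDerivAt_twoWave_x : HasDerivAt (fun x' => twoWave p q a b x' t)
    (twoWave (-I * a ^ 2 * p) (-I * b ^ 2 * q) a b x t) x :=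
  (((hasDerivAt_planeWave_x a x t).const_mul p).add
    ((hasDerivAt_planeWave_x b x t).const_mul q)).congr_deriv (by rw [twoWave]; ring)

theorem hasDerivAt_twoWave_t : HasDerivAt (fun t' => twoWave p q a b x t')
    (twoWave (-I / a ^ 2 * p) (-I / b ^ 2 * q) a b x t) t :=
  (((hasDerivAt_planeWave_t a x t).const_mul p).add
    ((hasDerivAt_planeWave_t b x t).const_mul q)).congr_deriv (by rw [twoWave]; ring)

theorem hasDerivAt_twoWave_xt (ha : a ≠ 0) (hb : b ≠ 0) :
    HasDerivAt (fun t' => twoWave (-I * a ^ 2 * p) (-I * b ^ 2 * q) a b x t')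
      (-twoWave p q a b x t) t := by
  refine hasDerivAt_twoWave_t.congr_deriv ?_
  have ha' : (a : ℂ) ≠ 0 := ofReal_ne_zero.mpr ha
  have hb' : (b : ℂ) ≠ 0 := ofReal_ne_zero.mpr hb
  simp only [twoWave]
  field_simp
  ring_nf
  rw [I_sq]
  ring

theorem conj_twoWave :
    conj (twoWave p q a b x t) = conj p / planeWave a x t + conj q / planeWave b x t := by
  simp only [twoWave, map_add, map_mul, conj_planeWave, div_eq_mul_inv]

theorem twoWave_ne_zero (hpq : ‖p‖ ≠ ‖q‖) : twoWave p q a b x t ≠ 0 := by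
  intro h
  apply hpq
  simpa [norm_planeWave] using congrArg norm (eq_neg_of_add_eq_zero_left h)

end TwoWave

section Soliton

variable (k h : ℝ) (c d : ℂ)

noncomputable def solitonAmplitude : ℂ := c * d * (k ^ 2 - h ^ 2)

noncomputable def solitonDenom (x t : ℝ) : ℂ :=
  k * h * twoWave (c * conj d * k) (conj c * d * h) h k x t

noncomputable def solitonDenomX (x t : ℝ) : ℂ :=
  k * h * twoWave (-I * h ^ 2 * (c * conj d * k)) (-I * k ^ 2 * (conj c * d * h)) h k x t

noncomputable def solitonDenomT (x t : ℝ) : ℂ :=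
  k * h * twoWave (-I / h ^ 2 * (c * conj d * k)) (-I / k ^ 2 * (conj c * d * h)) h k x t

theorem realSoliton_eq_div :
    realSoliton k h c d = fun x t => solitonAmplitude k h c d / solitonDenom k h c d x t := rfl

variable {k h c d} (x t : ℝ)

theorem hasDerivAt_solitonDenom_x :
    HasDerivAt (fun x' => solitonDenom k h c d x' t) (solitonDenomX k h c d x t) x :=
  hasDerivAt_twoWave_x.const_mul _

theorem hasDerivAt_solitonDenom_t :
    HasDerivAt (fun t' => solitonDenom k h c d x t') (solitonDenomT k h c d x t) t :=
  hasDerivAt_twoWave_t.const_mul _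

theorem hasDerivAt_solitonDenomX_t (hk : k ≠ 0) (hh : h ≠ 0) :
    HasDerivAt (fun t' => solitonDenomX k h c d x t') (-solitonDenom k h c d x t) t := by
  simpa only [solitonDenom, solitonDenomX, mul_neg] using
    (hasDerivAt_twoWave_xt hh hk).const_mul ((k : ℂ) * h)

theorem solitonDenom_bilinear :
    conj (solitonDenom k h c d x t) *
        (solitonDenom k h c d x t ^ 2 + solitonDenomX k h c d x t * solitonDenomT k h c d x t)
      + I * (solitonAmplitude k h c d * conj (solitonAmplitude k h c d)) * solitonDenomX k h c d x t
      = 0 := by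
  have he₁ : planeWave h x t ≠ 0 := exp_ne_zero _
  have he₂ : planeWave k x t ≠ 0 := exp_ne_zero _
  simp only [solitonDenom, solitonDenomX, solitonDenomT, solitonAmplitude, map_mul, conj_twoWave]
  simp only [twoWave, map_sub, map_pow, conj_ofReal, conj_conj]
  generalize planeWave h x t = e₁ at *
  generalize planeWave k x t = e₂ at *
  field_simp
  ring_nf
  rw [I_sq]
  ring

theorem realSoliton_flResidual (hk : k ≠ 0) (hh : h ≠ 0) (hD : solitonDenom k h c d x t ≠ 0) :
    flResidual (realSoliton k h c d) x t = 0 := by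
  rw [realSoliton_eq_div, flResidual_div (fun t' => hasDerivAt_solitonDenom_x x t')
    (hasDerivAt_solitonDenom_t x t) (hasDerivAt_solitonDenomX_t x t hk hh) hD,
    solitonDenom_bilinear, mul_zero]

theorem solitonDenom_ne_zero (hk : k ≠ 0) (hh : h ≠ 0) (hc : c ≠ 0) (hd : d ≠ 0)
    (hkh : |k| ≠ |h|) : solitonDenom k h c d x t ≠ 0 := by
  refine mul_ne_zero (by exact_mod_cast mul_ne_zero hk hh) (twoWave_ne_zero fun heq => hkh ?_)
  have hcd : ‖c‖ * ‖d‖ ≠ 0 := by positivity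
  simp only [norm_mul, Complex.norm_conj, norm_real, Real.norm_eq_abs] at heq
  exact mul_right_cancel₀ hcd (by linear_combination heq)

end Soliton

theorem realSoliton_solves_FL_general (k h : ℝ) (hk : k ≠ 0) (hh : h ≠ 0)
    (c d : ℂ) (hc : c ≠ 0) (hd : d ≠ 0) :
    (∀ x t : ℝ,
      ((k : ℂ) * (h : ℂ) *
        (c * starRingEnd ℂ d * (k : ℂ) *
            Complex.exp (-I * ((h : ℂ) ^ 2 * (x : ℂ) + (t : ℂ) / (h : ℂ) ^ 2))
          + starRingEnd ℂ c * d * (h : ℂ) *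
            Complex.exp (-I * ((k : ℂ) ^ 2 * (x : ℂ) + (t : ℂ) / (k : ℂ) ^ 2))) ≠ 0) →
      dT (dX (realSoliton k h c d)) x t + realSoliton k h c d x t
        - 2 * I * (realSoliton k h c d x t * starRingEnd ℂ (realSoliton k h c d x t))
          * dX (realSoliton k h c d) x t = 0) ∧
    (|k| ≠ |h| →
      ∀ x t : ℝ,
        ((k : ℂ) * (h : ℂ) *
          (c * starRingEnd ℂ d * (k : ℂ) *
              Complex.exp (-I * ((h : ℂ) ^ 2 * (x : ℂ) + (t : ℂ) / (h : ℂ) ^ 2))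
            + starRingEnd ℂ c * d * (h : ℂ) *
              Complex.exp (-I * ((k : ℂ) ^ 2 * (x : ℂ) + (t : ℂ) / (k : ℂ) ^ 2))) ≠ 0)) :=
  ⟨fun x t hD => realSoliton_flResidual x t hk hh hD,
    fun hkh x t => solitonDenom_ne_zero x t hk hh hc hd hkh⟩

theorem realSoliton_solves_FL (k h : ℝ) (hk : k ≠ 0) (hh : h ≠ 0) (hkh : k ^ 2 ≠ h ^ 2)
    (c d : ℂ) (hc : c ≠ 0) (hd : d ≠ 0) :
    (∀ x t : ℝ,
      ((k : ℂ) * (h : ℂ) *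
        (c * starRingEnd ℂ d * (k : ℂ) *
            Complex.exp (-I * ((h : ℂ) ^ 2 * (x : ℂ) + (t : ℂ) / (h : ℂ) ^ 2))
          + starRingEnd ℂ c * d * (h : ℂ) *
            Complex.exp (-I * ((k : ℂ) ^ 2 * (x : ℂ) + (t : ℂ) / (k : ℂ) ^ 2))) ≠ 0) →
      dT (dX (realSoliton k h c d)) x t + realSoliton k h c d x t
        - 2 * I * (realSoliton k h c d x t * starRingEnd ℂ (realSoliton k h c d x t))
          * dX (realSoliton k h c d) x t = 0) ∧
    (|k| ≠ |h| →
      ∀ x t : ℝ,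
        ((k : ℂ) * (h : ℂ) *
          (c * starRingEnd ℂ d * (k : ℂ) *
              Complex.exp (-I * ((h : ℂ) ^ 2 * (x : ℂ) + (t : ℂ) / (h : ℂ) ^ 2))
            + starRingEnd ℂ c * d * (h : ℂ) *
              Complex.exp (-I * ((k : ℂ) ^ 2 * (x : ℂ) + (t : ℂ) / (k : ℂ) ^ 2))) ≠ 0)) :=
  realSoliton_solves_FL_general k h hk hh c d hc hd
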